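/- Under the Davie-type solution hypotheses, there exists a constant M > 0, depending only on K, c₂, sup_x‖σ(x)‖ and sup_x‖Dσ(x)‖ (independent of ε, T and (B,𝔹)), such that for all 0 ≤ s ≤ t ≤ T: ‖R^X‖_{2α,[s,t]} ≤ M[(1 + sup_{u∈[0,T]}|X_u|)|t−s|^{1−2α} + ‖𝔹‖_{2α,[0,T]} + (‖B‖_{α,[0,T]}‖R^{σ(X)}‖_{2α,[s,t]} + ‖𝔹‖_{2α,[0,T]}‖X‖_{α,[s,t]})|t−s|^{α}]. -/

import Mathlib

open scoped BigOperators
open MeasureTheory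

noncomputable section

def pairSet {E : Type*} [NormedAddCommGroup E] (β a b : ℝ) (F : ℝ → ℝ → E) : Set ℝ :=
  {x | ∃ s t : ℝ, s ∈ Set.Icc a b ∧ t ∈ Set.Icc a b ∧ x = ‖F s t‖ / |t - s| ^ β}

noncomputable def pSup {E : Type*} [NormedAddCommGroup E] (β a b : ℝ) (F : ℝ → ℝ → E) : ℝ :=
  sSup (pairSet β a b F)

def incr {E : Type*} [NormedAddCommGroup E] (Z : ℝ → E) : ℝ → ℝ → E := fun s t => Z t - Z s

def tens {r : ℕ} (x y : EuclideanSpace ℝ (Fin r)) : EuclideanSpace ℝ (Fin r × Fin r) :=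
  (WithLp.equiv 2 _).symm (fun p => x p.1 * y p.2)

def bapp {r d : ℕ}
    (L : EuclideanSpace ℝ (Fin r) →L[ℝ] EuclideanSpace ℝ (Fin r) →L[ℝ] EuclideanSpace ℝ (Fin d))
    (M : EuclideanSpace ℝ (Fin r × Fin r)) : EuclideanSpace ℝ (Fin d) :=
  ∑ p : Fin r × Fin r, M p • L (EuclideanSpace.single p.1 1) (EuclideanSpace.single p.2 1)

def Chen {r : ℕ} (T : ℝ) (B : ℝ → EuclideanSpace ℝ (Fin r))
    (𝔹 : ℝ → ℝ → EuclideanSpace ℝ (Fin r × Fin r)) : Prop :=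
  ∀ s ∈ Set.Icc 0 T, ∀ u ∈ Set.Icc 0 T, ∀ t ∈ Set.Icc 0 T,
    𝔹 s t - 𝔹 s u - 𝔹 u t = tens (B u - B s) (B t - B u)

def RSConv {E : Type*} [NormedAddCommGroup E] (a b : ℝ) (F : ℝ → ℝ → E) (I : E) : Prop :=
  ∀ η > (0:ℝ), ∃ δ > (0:ℝ), ∀ (n : ℕ) (π : ℕ → ℝ),
    π 0 = a → π n = b → (∀ k < n, π k < π (k + 1)) →
    (∀ k < n, π (k + 1) - π k < δ) →
    ‖(∑ k ∈ Finset.range n, F (π k) (π (k + 1))) - I‖ < η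

abbrev Ed (d : ℕ) := EuclideanSpace ℝ (Fin d)

/-- The remainder `R^X_{s,t} = X_{s,t} − ε σ(X_s) B_{s,t}`. -/
def RX {r d : ℕ} (ε : ℝ) (σ : Ed d → (Ed r →L[ℝ] Ed d)) (B : ℝ → Ed r) (X : ℝ → Ed d) :
    ℝ → ℝ → Ed d :=
  fun s t => X t - X s - ε • (σ (X s)) (B t - B s)

/-- The remainder `R^{σ(X)}_{s,t} = σ(X_t) − σ(X_s) − ε Dσ(X_s)[σ(X_s) B_{s,t}]`. -/
def RsX {r d : ℕ} (ε : ℝ) (σ : Ed d → (Ed r →L[ℝ] Ed d)) (B : ℝ → Ed r) (X : ℝ → Ed d) :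
    ℝ → ℝ → (Ed r →L[ℝ] Ed d) :=
  fun s t => σ (X t) - σ (X s) - ε • (fderiv ℝ σ (X s)) ((σ (X s)) (B t - B s))

/-- `X` is a Davie-type solution of `dX = b(X)dt + ε σ(X) dB` with constant `K`. -/
def DavieSol {r d : ℕ} (T α ε K : ℝ) (b : Ed d → Ed d) (σ : Ed d → (Ed r →L[ℝ] Ed d))
    (B : ℝ → Ed r) (𝔹 : ℝ → ℝ → EuclideanSpace ℝ (Fin r × Fin r)) (X : ℝ → Ed d) : Prop :=
  ∀ s t : ℝ, 0 ≤ s → s ≤ t → t ≤ T →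
    ‖X t - X s - (∫ u in s..t, b (X u)) - ε • (σ (X s)) (B t - B s)
        - (ε^2) • bapp ((fderiv ℝ σ (X s)).comp (σ (X s))) (𝔹 s t)‖ ≤
      K * (pSup α s t (incr B) * pSup (2*α) s t (RsX ε σ B X)
            + pSup (2*α) s t 𝔹 * pSup α s t (incr X)) * (t - s) ^ (3*α)

/-- The rough path norm `‖(B,𝔹)‖_{α,[0,T]} = ‖B‖_{α,[0,T]} + ‖𝔹‖_{2α,[0,T]}^{1/2}`. -/
noncomputable def rpNorm {r : ℕ} (α T : ℝ) (B : ℝ → Ed r)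
    (𝔹 : ℝ → ℝ → EuclideanSpace ℝ (Fin r × Fin r)) : ℝ :=
  pSup α 0 T (incr B) + (pSup (2*α) 0 T 𝔹) ^ ((1:ℝ)/2)

/-!
For `u < v`, the Davie estimate leaves `R^X_{u,v}` equal, up to its remainder, to the drift
`∫_u^v b(X)` plus `ε² Dσσ 𝔹_{u,v}`. The remainder is at most
`K (bracket over [u,v]) |v-u|^{3α} ≤ K (bracket over [s,t]) (t-s)^α |v-u|^{2α}`, the drift is at
most `c₂ (1 + sup|X|) |v-u| ≤ c₂ (1 + sup|X|) (t-s)^{1-2α} |v-u|^{2α}`, and the last term is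
`O(‖𝔹‖_{2α} |v-u|^{2α})`.

The Hölder seminorms are suprema over unordered pairs, so `v < u` must be handled too: there
`R^X_{u,v} = -R^X_{v,u} + ε R^{σ(X)}_{v,u} B_{v,u} + ε² Dσσ (B_{v,u} ⊗ B_{v,u})`, and Chen's
relation turns `B_{v,u} ⊗ B_{v,u}` into `𝔹_{v,u} + 𝔹_{u,v}`.

Comparing seminorms over `[u,v]` with those over `[s,t]` needs the latter to be finite (`sSup` of
an unbounded set is `0`); for `‖R^{σ(X)}‖_{2α,[s,t]}` this follows from the second-order Taylor
bound `R^{σ(X)}_{u,v} = O(|X_{u,v}|² + |R^X_{u,v}|)`.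
-/

open Set

section HolderSup

variable {E : Type*} [NormedAddCommGroup E] {β a b : ℝ} {F : ℝ → ℝ → E}

lemma pSup_nonneg (β a b : ℝ) (F : ℝ → ℝ → E) : 0 ≤ pSup β a b F :=
  Real.sSup_nonneg <| by rintro _ ⟨s, t, -, -, rfl⟩; positivity

lemma norm_le_pSup_mul (h : BddAbove (pairSet β a b F)) {u v : ℝ} (hu : u ∈ Icc a b)
    (hv : v ∈ Icc a b) (huv : u ≠ v) : ‖F u v‖ ≤ pSup β a b F * |v - u| ^ β := by
  have hpos : 0 < |v - u| ^ β := Real.rpow_pos_of_pos (abs_pos.mpr (sub_ne_zero.mpr huv.symm)) _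
  exact (div_le_iff₀ hpos).mp (le_csSup h ⟨u, v, hu, hv, rfl⟩)

lemma pairSet_mono {a' b' : ℝ} (h : Icc a' b' ⊆ Icc a b) : pairSet β a' b' F ⊆ pairSet β a b F := by
  rintro x ⟨s, t, hs, ht, rfl⟩
  exact ⟨s, t, h hs, h ht, rfl⟩

lemma pSup_mono {a' b' : ℝ} (h : BddAbove (pairSet β a b F)) (hab' : a' ≤ b')
    (hsub : Icc a' b' ⊆ Icc a b) : pSup β a' b' F ≤ pSup β a b F :=
  csSup_le_csSup h ⟨_, a', a', left_mem_Icc.mpr hab', left_mem_Icc.mpr hab', rfl⟩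
    (pairSet_mono hsub)

lemma bddAbove_pairSet_of_norm_le {C : ℝ} (hβ : β ≠ 0) (hC : 0 ≤ C)
    (h : ∀ p ∈ Icc a b, ∀ q ∈ Icc a b, p ≠ q → ‖F p q‖ ≤ C * |q - p| ^ β) :
    BddAbove (pairSet β a b F) := by
  refine ⟨C, ?_⟩
  rintro _ ⟨p, q, hp, hq, rfl⟩
  rcases eq_or_ne p q with rfl | hpq
  · simp [Real.zero_rpow hβ, hC]
  · exact div_le_of_le_mul₀ (by positivity) hC (h p hp q hq hpq)

end HolderSup

lemma Real.rpow_add_le_mul_rpow {x y γ δ : ℝ} (hx : 0 < x) (hxy : x ≤ y) (hγ : 0 ≤ γ) :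
    x ^ (γ + δ) ≤ y ^ γ * x ^ δ := by
  rw [Real.rpow_add hx]
  gcongr

lemma add_le_mul_add_of_le_abs {K c q Q G₁ C G₃ : ℝ} (hK : 0 ≤ K) (hG₁ : 0 ≤ G₁) (hC : 0 ≤ C)
    (hG₃ : 0 ≤ G₃) (hQ : 0 ≤ Q) (hqQ : q ≤ Q) :
    (K + 1) * G₃ + c * G₁ + 3 * q * C ≤ (K + 1 + |c| + 3 * Q) * (G₁ + C + G₃) := by
  nlinarith [mul_le_mul_of_nonneg_right (le_abs_self c) hG₁, mul_le_mul_of_nonneg_right hqQ hC,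
    mul_nonneg (by linarith : 0 ≤ K + 1) (add_nonneg hG₁ hC),
    mul_nonneg (abs_nonneg c) (add_nonneg hC hG₃), mul_nonneg hQ (add_nonneg hG₁ hG₃)]

section SecondLevel

variable {r d : ℕ}

lemma norm_bapp_le (L : Ed r →L[ℝ] Ed r →L[ℝ] Ed d) (M : EuclideanSpace ℝ (Fin r × Fin r)) :
    ‖bapp L M‖ ≤ (r : ℝ) ^ 2 * ‖L‖ * ‖M‖ := by
  have hterm (p : Fin r × Fin r) :
      ‖M p • L (EuclideanSpace.single p.1 1) (EuclideanSpace.single p.2 1)‖ ≤ ‖L‖ * ‖M‖ := by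
    rw [norm_smul, mul_comm]
    gcongr
    · exact (L.le_opNorm₂ _ _).trans (by simp)
    · exact PiLp.norm_apply_le M p
  calc ‖bapp L M‖ ≤ ∑ _p : Fin r × Fin r, ‖L‖ * ‖M‖ :=
        (norm_sum_le _ _).trans (Finset.sum_le_sum fun p _ => hterm p)
    _ = (r : ℝ) ^ 2 * ‖L‖ * ‖M‖ := by simp [sq, mul_assoc]

lemma bapp_tens (L : Ed r →L[ℝ] Ed r →L[ℝ] Ed d) (x y : Ed r) : bapp L (tens x y) = L x y := by
  have hsum (z : Ed r) : z = ∑ i, z i • EuclideanSpace.single i (1 : ℝ) := by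
    simpa using ((EuclideanSpace.basisFun (Fin r) ℝ).sum_repr z).symm
  conv_rhs => rw [hsum x, hsum y]
  simp only [map_sum, _root_.map_smul, FunLike.coe_sum, FunLike.coe_smul, Finset.sum_apply,
    Pi.smul_apply, Finset.smul_sum]
  rw [bapp, ← Finset.univ_product_univ, Finset.sum_product, Finset.sum_comm]
  refine Finset.sum_congr rfl fun j _ => Finset.sum_congr rfl fun i _ => ?_
  simp only [tens, WithLp.equiv_symm_apply, smul_smul]
  ring_nf

lemma tens_self_eq_of_chen {T : ℝ} {B : ℝ → Ed r} {𝔹 : ℝ → ℝ → EuclideanSpace ℝ (Fin r × Fin r)}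
    (hChen : Chen T B 𝔹) {u v : ℝ} (hu : u ∈ Icc 0 T) (hv : v ∈ Icc 0 T) :
    tens (B u - B v) (B u - B v) = 𝔹 v u + 𝔹 u v := by
  have hdiag : 𝔹 v v = 0 := by
    have h := hChen v hv v hv v hv
    have h0 : tens (B v - B v) (B v - B v) = 0 := by ext; simp [tens]
    rw [h0] at h
    simpa using h
  have hneg : tens (B u - B v) (B v - B u) = -tens (B u - B v) (B u - B v) := by
    ext; simp [tens]; ring
  have h := hChen v hv u hu v hv
  rw [hdiag, hneg] at h
  rw [← neg_neg (tens _ _), ← h]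
  abel

end SecondLevel

lemma norm_sub_sub_fderiv_le {E F : Type*} [NormedAddCommGroup E] [NormedSpace ℝ E]
    [NormedAddCommGroup F] [NormedSpace ℝ F] {f : E → F} (hf : ContDiff ℝ 2 f) {C : ℝ}
    (hC : ∀ x, ‖iteratedFDeriv ℝ 2 f x‖ ≤ C) (a c : E) :
    ‖f c - f a - fderiv ℝ f a (c - a)‖ ≤ C * ‖c - a‖ ^ 2 := by
  have hdf : Differentiable ℝ (fderiv ℝ f) := (hf.fderiv_right le_rfl).differentiable one_ne_zero
  have hlip (z : E) : ‖fderiv ℝ f z - fderiv ℝ f a‖ ≤ C * ‖z - a‖ :=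
    convex_univ.norm_image_sub_le_of_norm_fderiv_le (fun x _ => hdf x)
      (fun x _ => by rw [← norm_iteratedFDeriv_one, norm_iteratedFDeriv_fderiv]; exact hC x)
      (mem_univ a) (mem_univ z)
  have hC0 : 0 ≤ C := (norm_nonneg _).trans (hC a)
  have h := (convex_closedBall a ‖c - a‖).norm_image_sub_le_of_norm_fderiv_le'
    (fun x _ => hf.differentiable two_ne_zero x)
    (fun x hx => (hlip x).trans (mul_le_mul_of_nonneg_left (mem_closedBall_iff_norm.mp hx) hC0))
    (Metric.mem_closedBall_self (norm_nonneg _)) (mem_closedBall_iff_norm.mpr le_rfl)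
  linarith [sq (‖c - a‖)]

lemma norm_intervalIntegral_le_of_linear_growth {E F : Type*} [NormedAddCommGroup E]
    [NormedAddCommGroup F] [NormedSpace ℝ F] {b : E → F} {X : ℝ → E} {c S p q : ℝ}
    (hb : ∀ x, ‖b x‖ ≤ c * (1 + ‖x‖)) (hpq : p ≤ q) (hS : ∀ w ∈ Icc p q, ‖X w‖ ≤ S) :
    ‖∫ w in p..q, b (X w)‖ ≤ c * (1 + S) * (q - p) := by
  have hc : 0 ≤ c := by simpa using (norm_nonneg _).trans (hb 0)
  have h := intervalIntegral.norm_integral_le_of_norm_le_const (f := fun w => b (X w))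
    (C := c * (1 + S)) fun w hw => by
      rw [uIoc_of_le hpq] at hw
      exact (hb _).trans (by gcongr; exact hS w (Ioc_subset_Icc_self hw))
  rwa [abs_of_nonneg (sub_nonneg.mpr hpq)] at h

section Remainders

variable {r d : ℕ} {ε : ℝ} {σ : Ed d → (Ed r →L[ℝ] Ed d)} {B : ℝ → Ed r} {X : ℝ → Ed d}

lemma RsX_eq_taylor_add (u v : ℝ) :
    RsX ε σ B X u v = (σ (X v) - σ (X u) - fderiv ℝ σ (X u) (X v - X u))
      + fderiv ℝ σ (X u) (RX ε σ B X u v) := by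
  simp only [RsX, RX, map_sub, map_smul]
  abel

lemma RX_swap (u v : ℝ) :
    RX ε σ B X u v = -RX ε σ B X v u + ε • RsX ε σ B X v u (B u - B v)
      + ε ^ 2 • ((fderiv ℝ σ (X v)).comp (σ (X v))) (B u - B v) (B u - B v) := by
  have hflip : σ (X u) (B v - B u) = -σ (X u) (B u - B v) := by
    rw [← map_neg, neg_sub]
  simp only [RX, RsX, sub_apply, smul_apply, ContinuousLinearMap.coe_comp, Function.comp_apply, sq,
    mul_smul, smul_sub, hflip, smul_neg]
  abel

lemma norm_RsX_le {M₁ M₂ : ℝ} (hσ : ContDiff ℝ 2 σ) (hM₁ : ∀ x, ‖fderiv ℝ σ x‖ ≤ M₁)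
    (hM₂ : ∀ x, ‖iteratedFDeriv ℝ 2 σ x‖ ≤ M₂) (u v : ℝ) :
    ‖RsX ε σ B X u v‖ ≤ M₂ * ‖X v - X u‖ ^ 2 + M₁ * ‖RX ε σ B X u v‖ := by
  rw [RsX_eq_taylor_add]
  refine (norm_add_le _ _).trans (add_le_add (norm_sub_sub_fderiv_le hσ hM₂ _ _) ?_)
  exact (ContinuousLinearMap.le_opNorm _ _).trans (by gcongr; exact hM₁ _)

lemma bddAbove_pairSet_RsX {α a b M₁ M₂ : ℝ} (hα : α ≠ 0) (hσ : ContDiff ℝ 2 σ)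
    (hM₁ : ∀ x, ‖fderiv ℝ σ x‖ ≤ M₁) (hM₂ : ∀ x, ‖iteratedFDeriv ℝ 2 σ x‖ ≤ M₂)
    (hX : BddAbove (pairSet α a b (incr X))) (hR : BddAbove (pairSet (2 * α) a b (RX ε σ B X))) :
    BddAbove (pairSet (2 * α) a b (RsX ε σ B X)) := by
  have hM₁0 : 0 ≤ M₁ := (ContinuousLinearMap.opNorm_nonneg _).trans (hM₁ 0)
  have hM₂0 : 0 ≤ M₂ := (norm_nonneg _).trans (hM₂ 0)
  have hCX := pSup_nonneg α a b (incr X)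
  have hCR := pSup_nonneg (2 * α) a b (RX ε σ B X)
  refine bddAbove_pairSet_of_norm_le (C := M₂ * pSup α a b (incr X) ^ 2 + M₁ * pSup (2 * α) a b
    (RX ε σ B X)) (mul_ne_zero two_ne_zero hα) (by positivity) fun p hp q hq hpq => ?_
  have hsq : (|q - p| ^ α) ^ 2 = |q - p| ^ (2 * α) := by
    rw [← Real.rpow_natCast, ← Real.rpow_mul (abs_nonneg _), Nat.cast_ofNat, mul_comm]
  calc ‖RsX ε σ B X p q‖ ≤ M₂ * ‖X q - X p‖ ^ 2 + M₁ * ‖RX ε σ B X p q‖ :=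
        norm_RsX_le hσ hM₁ hM₂ p q
    _ ≤ M₂ * (pSup α a b (incr X) * |q - p| ^ α) ^ 2
          + M₁ * (pSup (2 * α) a b (RX ε σ B X) * |q - p| ^ (2 * α)) := by
        gcongr
        · exact norm_le_pSup_mul hX hp hq hpq
        · exact norm_le_pSup_mul hR hp hq hpq
    _ = _ := by rw [mul_pow, hsq]; ring

lemma norm_sq_smul_bapp_le {M₀ M₁ : ℝ} (hε : |ε| ≤ 1) (hM₀ : ∀ x, ‖σ x‖ ≤ M₀)
    (hM₁ : ∀ x, ‖fderiv ℝ σ x‖ ≤ M₁) (x : Ed d) (M : EuclideanSpace ℝ (Fin r × Fin r)) :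
    ‖ε ^ 2 • bapp ((fderiv ℝ σ x).comp (σ x)) M‖ ≤ (r : ℝ) ^ 2 * (M₁ * M₀) * ‖M‖ := by
  have hM₁0 : 0 ≤ M₁ := (ContinuousLinearMap.opNorm_nonneg _).trans (hM₁ 0)
  have hcomp : ‖(fderiv ℝ σ x).comp (σ x)‖ ≤ M₁ * M₀ :=
    (ContinuousLinearMap.opNorm_comp_le _ _).trans (by gcongr <;> simp only [hM₀, hM₁])
  rw [norm_smul, norm_pow, Real.norm_eq_abs]
  calc |ε| ^ 2 * ‖bapp ((fderiv ℝ σ x).comp (σ x)) M‖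
      ≤ 1 * ((r : ℝ) ^ 2 * ‖(fderiv ℝ σ x).comp (σ x)‖ * ‖M‖) := by
        gcongr
        · exact pow_le_one₀ (abs_nonneg _) hε
        · exact norm_bapp_le _ _
    _ ≤ (r : ℝ) ^ 2 * (M₁ * M₀) * ‖M‖ := by rw [one_mul]; gcongr

end Remainders

def davieBracket {r d : ℕ} (α T s t ε : ℝ) (σ : Ed d → (Ed r →L[ℝ] Ed d)) (B : ℝ → Ed r)
    (𝔹 : ℝ → ℝ → EuclideanSpace ℝ (Fin r × Fin r)) (X : ℝ → Ed d) : ℝ :=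
  pSup α 0 T (incr B) * pSup (2 * α) s t (RsX ε σ B X) + pSup (2 * α) 0 T 𝔹 * pSup α s t (incr X)

lemma davieBracket_nonneg {r d : ℕ} (α T s t ε : ℝ) (σ : Ed d → (Ed r →L[ℝ] Ed d))
    (B : ℝ → Ed r) (𝔹 : ℝ → ℝ → EuclideanSpace ℝ (Fin r × Fin r)) (X : ℝ → Ed d) :
    0 ≤ davieBracket α T s t ε σ B 𝔹 X := by
  unfold davieBracket
  have := pSup_nonneg α 0 T (incr B)
  have := pSup_nonneg (2 * α) s t (RsX ε σ B X)
  have := pSup_nonneg (2 * α) 0 T 𝔹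
  have := pSup_nonneg α s t (incr X)
  positivity

section RoughPath

variable {r d : ℕ} {T α ε K M₀ M₁ : ℝ} {b : Ed d → Ed d} {σ : Ed d → (Ed r →L[ℝ] Ed d)}
  {B : ℝ → Ed r} {𝔹 : ℝ → ℝ → EuclideanSpace ℝ (Fin r × Fin r)} {X : ℝ → Ed d}

lemma norm_RX_le_of_davieSol (hDavie : DavieSol T α ε K b σ B 𝔹 X) (hε : |ε| ≤ 1)
    (hM₀ : ∀ x, ‖σ x‖ ≤ M₀) (hM₁ : ∀ x, ‖fderiv ℝ σ x‖ ≤ M₁) {p q : ℝ} (hp : 0 ≤ p) (hpq : p ≤ q)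
    (hq : q ≤ T) :
    ‖RX ε σ B X p q‖ ≤
      K * (pSup α p q (incr B) * pSup (2 * α) p q (RsX ε σ B X)
          + pSup (2 * α) p q 𝔹 * pSup α p q (incr X)) * (q - p) ^ (3 * α)
        + ‖∫ w in p..q, b (X w)‖ + (r : ℝ) ^ 2 * (M₁ * M₀) * ‖𝔹 p q‖ := by
  have hsplit : RX ε σ B X p q =
      (X q - X p - (∫ w in p..q, b (X w)) - ε • (σ (X p)) (B q - B p)
        - ε ^ 2 • bapp ((fderiv ℝ σ (X p)).comp (σ (X p))) (𝔹 p q))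
      + (∫ w in p..q, b (X w)) + ε ^ 2 • bapp ((fderiv ℝ σ (X p)).comp (σ (X p))) (𝔹 p q) := by
    simp only [RX]
    abel
  rw [hsplit]
  exact norm_add₃_le.trans (add_le_add (add_le_add (hDavie p q hp hpq hq) le_rfl)
    (norm_sq_smul_bapp_le hε hM₀ hM₁ _ _))

lemma norm_RX_swap_le (hChen : Chen T B 𝔹) (hε : |ε| ≤ 1) (hM₀ : ∀ x, ‖σ x‖ ≤ M₀)
    (hM₁ : ∀ x, ‖fderiv ℝ σ x‖ ≤ M₁) {u v : ℝ} (hu : u ∈ Icc 0 T) (hv : v ∈ Icc 0 T) :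
    ‖RX ε σ B X u v‖ ≤ ‖RX ε σ B X v u‖ + ‖RsX ε σ B X v u‖ * ‖B u - B v‖
      + (r : ℝ) ^ 2 * (M₁ * M₀) * (‖𝔹 v u‖ + ‖𝔹 u v‖) := by
  rw [RX_swap, ← bapp_tens, tens_self_eq_of_chen hChen hu hv]
  refine norm_add₃_le.trans (add_le_add (add_le_add (norm_neg _).le ?_) ?_)
  · rw [norm_smul, Real.norm_eq_abs]
    calc |ε| * ‖RsX ε σ B X v u (B u - B v)‖ ≤ 1 * (‖RsX ε σ B X v u‖ * ‖B u - B v‖) := by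
          gcongr
          exact ContinuousLinearMap.le_opNorm _ _
      _ = _ := one_mul _
  · have hM₁0 : 0 ≤ M₁ := (ContinuousLinearMap.opNorm_nonneg _).trans (hM₁ 0)
    have hM₀0 : 0 ≤ M₀ := (norm_nonneg _).trans (hM₀ 0)
    exact (norm_sq_smul_bapp_le hε hM₀ hM₁ _ _).trans (by gcongr; exact norm_add_le _ _)

lemma bracket_le_davieBracket {s t p q : ℝ} (hB : BddAbove (pairSet α 0 T (incr B)))
    (h𝔹 : BddAbove (pairSet (2 * α) 0 T 𝔹)) (hX : BddAbove (pairSet α s t (incr X)))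
    (hRs : BddAbove (pairSet (2 * α) s t (RsX ε σ B X))) (hs : 0 ≤ s) (ht : t ≤ T)
    (hpq : p ≤ q) (hsub : Icc p q ⊆ Icc s t) :
    pSup α p q (incr B) * pSup (2 * α) p q (RsX ε σ B X) + pSup (2 * α) p q 𝔹 * pSup α p q (incr X)
      ≤ davieBracket α T s t ε σ B 𝔹 X := by
  have hsub0T : Icc p q ⊆ Icc 0 T := hsub.trans (Icc_subset_Icc hs ht)
  have := pSup_nonneg (2 * α) p q (RsX ε σ B X)
  have := pSup_nonneg α p q (incr X)
  have := pSup_nonneg α 0 T (incr B)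
  have := pSup_nonneg (2 * α) 0 T 𝔹
  have := pSup_mono hB hpq hsub0T
  have := pSup_mono hRs hpq hsub
  have := pSup_mono h𝔹 hpq hsub0T
  have := pSup_mono hX hpq hsub
  unfold davieBracket
  gcongr

lemma norm_RX_le_of_lt {c₂ S s t : ℝ} (hα : 0 < α) (hα' : 2 * α ≤ 1) (hK : 0 ≤ K)
    (hε : |ε| ≤ 1) (hb : ∀ x, ‖b x‖ ≤ c₂ * (1 + ‖x‖)) (hM₀ : ∀ x, ‖σ x‖ ≤ M₀)
    (hM₁ : ∀ x, ‖fderiv ℝ σ x‖ ≤ M₁) (hB : BddAbove (pairSet α 0 T (incr B)))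
    (h𝔹 : BddAbove (pairSet (2 * α) 0 T 𝔹)) (hX : BddAbove (pairSet α s t (incr X)))
    (hRs : BddAbove (pairSet (2 * α) s t (RsX ε σ B X))) (hS : ∀ w ∈ Icc s t, ‖X w‖ ≤ S)
    (hDavie : DavieSol T α ε K b σ B 𝔹 X) (hs : 0 ≤ s) (ht : t ≤ T) {p q : ℝ}
    (hp : p ∈ Icc s t) (hq : q ∈ Icc s t) (hpq : p < q) :
    ‖RX ε σ B X p q‖ ≤
      (K * (davieBracket α T s t ε σ B 𝔹 X * (t - s) ^ α)
        + c₂ * ((1 + S) * (t - s) ^ (1 - 2 * α))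
        + (r : ℝ) ^ 2 * (M₁ * M₀) * pSup (2 * α) 0 T 𝔹) * (q - p) ^ (2 * α) := by
  have hqp : 0 < q - p := sub_pos.mpr hpq
  have hqpts : q - p ≤ t - s := by linarith [hp.1, hq.2]
  have hsub : Icc p q ⊆ Icc s t := Icc_subset_Icc hp.1 hq.2
  have hst0T : Icc s t ⊆ Icc 0 T := Icc_subset_Icc hs ht
  have hc₂ : 0 ≤ c₂ := by simpa using (norm_nonneg _).trans (hb 0)
  have hS0 : 0 ≤ S := (norm_nonneg _).trans (hS p hp)
  have hM₁0 : 0 ≤ M₁ := (ContinuousLinearMap.opNorm_nonneg _).trans (hM₁ 0)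
  have hM₀0 : 0 ≤ M₀ := (norm_nonneg _).trans (hM₀ 0)
  have hremainder : K * (pSup α p q (incr B) * pSup (2 * α) p q (RsX ε σ B X)
        + pSup (2 * α) p q 𝔹 * pSup α p q (incr X)) * (q - p) ^ (3 * α)
      ≤ K * davieBracket α T s t ε σ B 𝔹 X * ((t - s) ^ α * (q - p) ^ (2 * α)) := by
    rw [show 3 * α = α + 2 * α by ring]
    exact mul_le_mul
      (mul_le_mul_of_nonneg_left (bracket_le_davieBracket hB h𝔹 hX hRs hs ht hpq.le hsub) hK)
      (Real.rpow_add_le_mul_rpow hqp hqpts hα.le) (by positivity)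
      (mul_nonneg hK (davieBracket_nonneg _ _ _ _ _ _ _ _ _))
  have hdrift : ‖∫ w in p..q, b (X w)‖
      ≤ c₂ * (1 + S) * ((t - s) ^ (1 - 2 * α) * (q - p) ^ (2 * α)) := by
    calc ‖∫ w in p..q, b (X w)‖ ≤ c₂ * (1 + S) * (q - p) ^ (1 - 2 * α + 2 * α) := by
          rw [sub_add_cancel, Real.rpow_one]
          exact norm_intervalIntegral_le_of_linear_growth hb hpq.le fun w hw => hS w (hsub hw)
      _ ≤ _ := by gcongr; exact Real.rpow_add_le_mul_rpow hqp hqpts (by linarith)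
  have hsecond : ‖𝔹 p q‖ ≤ pSup (2 * α) 0 T 𝔹 * (q - p) ^ (2 * α) := by
    simpa [abs_of_pos hqp] using norm_le_pSup_mul h𝔹 (hst0T hp) (hst0T hq) hpq.ne
  refine (norm_RX_le_of_davieSol hDavie hε hM₀ hM₁ (hs.trans hp.1) hpq.le (hq.2.trans ht)).trans ?_
  calc _ ≤ K * davieBracket α T s t ε σ B 𝔹 X * ((t - s) ^ α * (q - p) ^ (2 * α))
        + c₂ * (1 + S) * ((t - s) ^ (1 - 2 * α) * (q - p) ^ (2 * α))
        + (r : ℝ) ^ 2 * (M₁ * M₀) * (pSup (2 * α) 0 T 𝔹 * (q - p) ^ (2 * α)) := by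
        gcongr
    _ = _ := by ring

lemma norm_RX_le_of_gt {c₂ S s t : ℝ} (hα : 0 < α) (hα' : 2 * α ≤ 1) (hK : 0 ≤ K)
    (hε : |ε| ≤ 1) (hb : ∀ x, ‖b x‖ ≤ c₂ * (1 + ‖x‖)) (hM₀ : ∀ x, ‖σ x‖ ≤ M₀)
    (hM₁ : ∀ x, ‖fderiv ℝ σ x‖ ≤ M₁) (hB : BddAbove (pairSet α 0 T (incr B)))
    (h𝔹 : BddAbove (pairSet (2 * α) 0 T 𝔹)) (hChen : Chen T B 𝔹)
    (hX : BddAbove (pairSet α s t (incr X))) (hRs : BddAbove (pairSet (2 * α) s t (RsX ε σ B X)))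
    (hS : ∀ w ∈ Icc s t, ‖X w‖ ≤ S) (hDavie : DavieSol T α ε K b σ B 𝔹 X) (hs : 0 ≤ s)
    (ht : t ≤ T) {u v : ℝ} (hu : u ∈ Icc s t) (hv : v ∈ Icc s t) (hvu : v < u) :
    ‖RX ε σ B X u v‖ ≤
      ((K + 1) * (davieBracket α T s t ε σ B 𝔹 X * (t - s) ^ α)
        + c₂ * ((1 + S) * (t - s) ^ (1 - 2 * α))
        + 3 * ((r : ℝ) ^ 2 * (M₁ * M₀)) * pSup (2 * α) 0 T 𝔹) * (u - v) ^ (2 * α) := by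
  have hst0T : Icc s t ⊆ Icc 0 T := Icc_subset_Icc hs ht
  have hδ : |u - v| = u - v := abs_of_pos (sub_pos.mpr hvu)
  have hRs_vu := norm_le_pSup_mul hRs hv hu hvu.ne
  have hB_vu := norm_le_pSup_mul hB (hst0T hv) (hst0T hu) hvu.ne
  have h𝔹_vu := norm_le_pSup_mul h𝔹 (hst0T hv) (hst0T hu) hvu.ne
  have h𝔹_uv := norm_le_pSup_mul h𝔹 (hst0T hu) (hst0T hv) hvu.ne'
  rw [hδ] at hRs_vu hB_vu h𝔹_vu
  rw [abs_sub_comm, hδ] at h𝔹_uv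
  have hmixed : ‖RsX ε σ B X v u‖ * ‖B u - B v‖
      ≤ davieBracket α T s t ε σ B 𝔹 X * (t - s) ^ α * (u - v) ^ (2 * α) := by
    have := pSup_nonneg (2 * α) s t (RsX ε σ B X)
    have := pSup_nonneg α 0 T (incr B)
    have := pSup_nonneg α s t (incr X)
    have := pSup_nonneg (2 * α) 0 T 𝔹
    have hδα : (u - v) ^ α ≤ (t - s) ^ α := by gcongr <;> linarith [hu.2, hv.1]
    calc _ ≤ pSup (2 * α) s t (RsX ε σ B X) * (u - v) ^ (2 * α)
          * (pSup α 0 T (incr B) * (u - v) ^ α) := by gcongr; exact hB_vu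
      _ = pSup α 0 T (incr B) * pSup (2 * α) s t (RsX ε σ B X) * (u - v) ^ α
          * (u - v) ^ (2 * α) := by ring
      _ ≤ _ := by
        unfold davieBracket
        gcongr
        exact le_add_of_nonneg_right (by positivity)
  calc _ ≤ _ := norm_RX_swap_le hChen hε hM₀ hM₁ (hst0T hu) (hst0T hv)
    _ ≤ (K * (davieBracket α T s t ε σ B 𝔹 X * (t - s) ^ α)
          + c₂ * ((1 + S) * (t - s) ^ (1 - 2 * α))
          + (r : ℝ) ^ 2 * (M₁ * M₀) * pSup (2 * α) 0 T 𝔹) * (u - v) ^ (2 * α)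
        + davieBracket α T s t ε σ B 𝔹 X * (t - s) ^ α * (u - v) ^ (2 * α)
        + (r : ℝ) ^ 2 * (M₁ * M₀) * (pSup (2 * α) 0 T 𝔹 * (u - v) ^ (2 * α)
          + pSup (2 * α) 0 T 𝔹 * (u - v) ^ (2 * α)) := by
      have hM₁0 : 0 ≤ M₁ := (ContinuousLinearMap.opNorm_nonneg _).trans (hM₁ 0)
      have hM₀0 : 0 ≤ M₀ := (norm_nonneg _).trans (hM₀ 0)
      gcongr
      exact norm_RX_le_of_lt hα hα' hK hε hb hM₀ hM₁ hB h𝔹 hX hRs hS hDavie hs ht hv hu hvu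
    _ = _ := by ring

lemma norm_RX_le {c₂ S s t : ℝ} (hα : 0 < α) (hα' : 2 * α ≤ 1) (hK : 0 ≤ K) (hε : |ε| ≤ 1)
    (hb : ∀ x, ‖b x‖ ≤ c₂ * (1 + ‖x‖)) (hM₀ : ∀ x, ‖σ x‖ ≤ M₀)
    (hM₁ : ∀ x, ‖fderiv ℝ σ x‖ ≤ M₁) (hB : BddAbove (pairSet α 0 T (incr B)))
    (h𝔹 : BddAbove (pairSet (2 * α) 0 T 𝔹)) (hChen : Chen T B 𝔹)
    (hX : BddAbove (pairSet α s t (incr X))) (hRs : BddAbove (pairSet (2 * α) s t (RsX ε σ B X)))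
    (hS : ∀ w ∈ Icc s t, ‖X w‖ ≤ S) (hDavie : DavieSol T α ε K b σ B 𝔹 X) (hs : 0 ≤ s)
    (ht : t ≤ T) {u v : ℝ} (hu : u ∈ Icc s t) (hv : v ∈ Icc s t) :
    ‖RX ε σ B X u v‖ ≤
      ((K + 1) * (davieBracket α T s t ε σ B 𝔹 X * (t - s) ^ α)
        + c₂ * ((1 + S) * (t - s) ^ (1 - 2 * α))
        + 3 * ((r : ℝ) ^ 2 * (M₁ * M₀)) * pSup (2 * α) 0 T 𝔹) * |v - u| ^ (2 * α) := by
  rcases lt_trichotomy u v with huv | rfl | hvu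
  · refine (norm_RX_le_of_lt hα hα' hK hε hb hM₀ hM₁ hB h𝔹 hX hRs hS hDavie hs ht hu hv
      huv).trans ?_
    rw [abs_of_pos (sub_pos.mpr huv)]
    have hM₁0 : 0 ≤ M₁ := (ContinuousLinearMap.opNorm_nonneg _).trans (hM₁ 0)
    have hM₀0 : 0 ≤ M₀ := (norm_nonneg _).trans (hM₀ 0)
    have := pSup_nonneg (2 * α) 0 T 𝔹
    have := davieBracket_nonneg α T s t ε σ B 𝔹 X
    have : 0 ≤ t - s := by linarith [hu.1, hu.2]
    have hQC : 0 ≤ (r : ℝ) ^ 2 * (M₁ * M₀) * pSup (2 * α) 0 T 𝔹 := by positivity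
    have hG₃ : 0 ≤ davieBracket α T s t ε σ B 𝔹 X * (t - s) ^ α := by positivity
    gcongr ?_ * _
    linarith
  · simp [RX, Real.zero_rpow (by positivity : 2 * α ≠ 0)]
  · rw [abs_sub_comm, abs_of_pos (sub_pos.mpr hvu)]
    exact norm_RX_le_of_gt hα hα' hK hε hb hM₀ hM₁ hB h𝔹 hChen hX hRs hS hDavie hs ht hu hv hvu

end RoughPath

/-- inequality (Rh) of the paper: under the Davie-type
solution hypotheses there is a constant `M > 0` depending only on `K`, `c₂`,
`sup‖σ‖ ≤ M₀` and `sup‖Dσ‖ ≤ M₁` (and the fixed exponent `α`), independent of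
`ε`, `T` and `(B,𝔹)`, such that for all `0 ≤ s ≤ t ≤ T`,
`‖R^X‖_{2α,[s,t]} ≤ M[(1 + sup_{[0,T]}|X|)(t−s)^{1−2α} + ‖𝔹‖_{2α,[0,T]}
  + (‖B‖_{α,[0,T]}‖R^{σ(X)}‖_{2α,[s,t]} + ‖𝔹‖_{2α,[0,T]}‖X‖_{α,[s,t]})(t−s)^α]`
(stated as the equivalent pointwise bound on `[s,t]`). -/
theorem statement4 (d r : ℕ) (α K c₂ M₀ M₁ : ℝ)
    (hα : α ∈ Set.Ioo (1/3 : ℝ) (1/2)) (hK : 0 ≤ K) :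
    ∃ M > (0:ℝ),
      ∀ (c₁ M₂ M₃ T : ℝ), 0 < T →
      ∀ ε : ℝ, ε ∈ Set.Ioc (0:ℝ) 1 →
      ∀ b : Ed d → Ed d,
        (∀ x y, ‖b x - b y‖ ≤ c₁ * ‖x - y‖) →
        (∀ x, ‖b x‖ ≤ c₂ * (1 + ‖x‖)) →
      ∀ σ : Ed d → (Ed r →L[ℝ] Ed d), ContDiff ℝ 3 σ →
        (∀ x, ‖σ x‖ ≤ M₀) →
        (∀ x, ‖fderiv ℝ σ x‖ ≤ M₁) →
        (∀ x, ‖iteratedFDeriv ℝ 2 σ x‖ ≤ M₂) →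
        (∀ x, ‖iteratedFDeriv ℝ 3 σ x‖ ≤ M₃) →
      ∀ (B : ℝ → Ed r) (𝔹 : ℝ → ℝ → EuclideanSpace ℝ (Fin r × Fin r)),
        BddAbove (pairSet α 0 T (incr B)) →
        BddAbove (pairSet (2*α) 0 T 𝔹) →
        Chen T B 𝔹 →
      ∀ X : ℝ → Ed d, Continuous X →
        BddAbove (pairSet α 0 T (incr X)) →
        BddAbove (pairSet (2*α) 0 T (RX ε σ B X)) →
        DavieSol T α ε K b σ B 𝔹 X →
        ∀ s t : ℝ, 0 ≤ s → s ≤ t → t ≤ T →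
          ∀ u ∈ Set.Icc s t, ∀ v ∈ Set.Icc s t,
            ‖RX ε σ B X u v‖ ≤
              M * ((1 + sSup ((fun w => ‖X w‖) '' Set.Icc (0:ℝ) T)) * (t - s) ^ (1 - 2*α)
                    + pSup (2*α) 0 T 𝔹
                    + (pSup α 0 T (incr B) * pSup (2*α) s t (RsX ε σ B X)
                        + pSup (2*α) 0 T 𝔹 * pSup α s t (incr X)) * (t - s) ^ α)
                * |v - u| ^ (2*α) := by
  obtain ⟨hα₁, hα₂⟩ := hα
  refine ⟨K + 1 + |c₂| + 3 * ((r : ℝ) ^ 2 * (|M₁| * |M₀|)), by positivity, ?_⟩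
  intro _ M₂ _ T _ ε hε b _ hbg σ hσ hM₀ hM₁ hM₂ _ B 𝔹 hB h𝔹 hChen X hXc hX hRX hDavie
    s t hs _ ht u hu v hv
  have hst0T : Icc s t ⊆ Icc 0 T := Icc_subset_Icc hs ht
  have hS (w : ℝ) (hw : w ∈ Icc s t) : ‖X w‖ ≤ sSup ((fun w => ‖X w‖) '' Icc 0 T) :=
    le_csSup (isCompact_Icc.bddAbove_image (continuous_norm.comp hXc).continuousOn)
      ⟨w, hst0T hw, rfl⟩
  have hXst := hX.mono (pairSet_mono hst0T)
  have hRs := bddAbove_pairSet_RsX (by positivity) (hσ.of_le (by norm_num)) hM₁ hM₂ hXst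
    (hRX.mono (pairSet_mono hst0T))
  have hbound := norm_RX_le (by positivity) (by linarith) hK (abs_le.mpr ⟨by linarith [hε.1], hε.2⟩)
    hbg hM₀ hM₁ hB h𝔹 hChen hXst hRs hS hDavie hs ht hu hv
  refine hbound.trans ?_
  gcongr ?_ * _
  unfold davieBracket
  have hG₁ : 0 ≤ (1 + sSup ((fun w => ‖X w‖) '' Icc 0 T)) * (t - s) ^ (1 - 2 * α) :=
    mul_nonneg (by linarith [(norm_nonneg _).trans (hS u hu)]) (by positivity)
  have hG₃ := davieBracket_nonneg α T s t ε σ B 𝔹 X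
  unfold davieBracket at hG₃
  have hQ : (r : ℝ) ^ 2 * (M₁ * M₀) ≤ (r : ℝ) ^ 2 * (|M₁| * |M₀|) := by
    rw [← abs_mul]
    gcongr
    exact le_abs_self _
  exact add_le_mul_add_of_le_abs hK hG₁ (pSup_nonneg _ _ _ _) (by positivity) (by positivity) hQ
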